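/- Let F : ℝ³ → ℝ be a function such that there exist a continuous strictly positive function g : [0, ∞) → ℝ and a continuous strictly positive function h : ℝ → ℝ with F(v) = g(‖v‖²) for all v ∈ ℝ³ and F(v) = h(v₁) · h(v₂) · h(v₃) for all v = (v₁, v₂, v₃) ∈ ℝ³. Then there exist real constants C₁ > 0 and C₂ such that F(v) = C₁ · exp(C₂ · ‖v‖²) for all v ∈ ℝ³. -/

import Mathlib

/-!
The two postulates together give `g (x² + y² + z²) = h x * h y * h z`, and evaluating at
`(√s, √t, 0)`, `(√s, 0, 0)`, `(√t, 0, 0)` and `0` yields `g (s + t) * g 0 = g s * g t` for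
`s, t ≥ 0`. Hence `log (g t) - log (g 0)` is a continuous solution of Cauchy's equation on the
half-line, so it is linear there, and `g t = g 0 * exp (c * t)`.
-/

open Real Set

theorem exists_eq_mul_of_continuousOn_Ici_of_add {ψ : ℝ → ℝ} (hψ : ContinuousOn ψ (Ici 0))
    (hadd : ∀ s t, 0 ≤ s → 0 ≤ t → ψ (s + t) = ψ s + ψ t) :
    ∃ c, ∀ t, 0 ≤ t → ψ t = c * t := by
  -- `Ψ (a - b) = ψ a - ψ b` for `a, b ≥ 0` extends `ψ` additively to all of `ℝ`
  set Ψ : ℝ → ℝ := fun t => ψ (max t 0) - ψ (max (-t) 0)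
  have hΨ_sub : ∀ a b, 0 ≤ a → 0 ≤ b → Ψ (a - b) = ψ a - ψ b := by
    intro a b ha hb
    have hsplit : max (a - b) 0 + b = a + max (-(a - b)) 0 := by
      rcases le_total a b with hab | hab <;> simp [hab]
    have h := hadd (max (a - b) 0) b (le_max_right _ _) hb
    rw [hsplit, hadd a _ ha (le_max_right _ _)] at h
    linarith
  have hΨ_add : ∀ s t, Ψ (s + t) = Ψ s + Ψ t := by
    intro s t
    have hst := hΨ_sub (max s 0 + max t 0) (max (-s) 0 + max (-t) 0)
      (by positivity) (by positivity)
    rwa [add_sub_add_comm, max_zero_sub_max_neg_zero_eq_self,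
      max_zero_sub_max_neg_zero_eq_self, hadd _ _ (le_max_right _ _) (le_max_right _ _),
      hadd _ _ (le_max_right _ _) (le_max_right _ _), add_sub_add_comm] at hst
  have hΨ_cont : Continuous Ψ := by
    have hclamp : ∀ f : ℝ → ℝ, Continuous f → Continuous fun t => ψ (max (f t) 0) := fun f hf =>
      hψ.comp_continuous (hf.max continuous_const) fun t => mem_Ici.2 (le_max_right _ _)
    exact (hclamp id continuous_id).sub (hclamp _ continuous_neg)
  refine ⟨Ψ 1, fun t ht => ?_⟩
  have hlin := map_real_smul (AddMonoidHom.mk' Ψ hΨ_add) hΨ_cont t 1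
  simp only [AddMonoidHom.mk'_apply, smul_eq_mul, mul_one] at hlin
  have hψ0 : ψ 0 = 0 := by simpa using hadd 0 0 le_rfl le_rfl
  have hΨt := hΨ_sub t 0 ht le_rfl
  rw [sub_zero, hψ0, sub_zero, hlin] at hΨt
  rw [← hΨt, mul_comm]

theorem exists_eq_mul_exp_of_continuousOn_Ici_of_mul {g : ℝ → ℝ} (hg : ContinuousOn g (Ici 0))
    (hpos : ∀ t ∈ Ici (0 : ℝ), 0 < g t)
    (hmul : ∀ s t, 0 ≤ s → 0 ≤ t → g (s + t) * g 0 = g s * g t) :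
    ∃ c, ∀ t, 0 ≤ t → g t = g 0 * exp (c * t) := by
  have hne : ∀ t, 0 ≤ t → g t ≠ 0 := fun t ht => (hpos t ht).ne'
  obtain ⟨c, hc⟩ :=
    exists_eq_mul_of_continuousOn_Ici_of_add (ψ := fun t => log (g t) - log (g 0))
    ((continuousOn_log.comp hg hne).sub continuousOn_const) fun s t hs ht => by
      have h := congrArg log (hmul s t hs ht)
      rw [log_mul (hne _ (add_nonneg hs ht)) (hne 0 le_rfl), log_mul (hne s hs) (hne t ht)] at h
      linarith
  refine ⟨c, fun t ht => ?_⟩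
  rw [← hc t ht, exp_sub, exp_log (hpos t ht), exp_log (hpos 0 self_mem_Ici)]
  field_simp [hne 0 le_rfl]

theorem map_add_mul_map_zero_of_sum_sq {g h : ℝ → ℝ}
    (hgh : ∀ x y z, g (x ^ 2 + y ^ 2 + z ^ 2) = h x * h y * h z) {s t : ℝ} (hs : 0 ≤ s)
    (ht : 0 ≤ t) : g (s + t) * g 0 = g s * g t := by
  have hst := hgh (√s) (√t) 0
  have hs0 := hgh (√s) 0 0
  have ht0 := hgh (√t) 0 0
  have h00 := hgh 0 0 0
  simp only [sq_sqrt hs, sq_sqrt ht, zero_pow two_ne_zero, add_zero] at hst hs0 ht0 h00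
  rw [hst, hs0, ht0, h00]
  ring

theorem EuclideanSpace.norm_sq_fin_three (x y z : ℝ) :
    ‖!₂[x, y, z]‖ ^ 2 = x ^ 2 + y ^ 2 + z ^ 2 := by
  simp [EuclideanSpace.real_norm_sq_eq, Fin.sum_univ_three, add_assoc]

theorem maxwell_distribution_form_general
    (F : EuclideanSpace ℝ (Fin 3) → ℝ)
    (g : ℝ → ℝ) (hg_cont : ContinuousOn g (Ici (0 : ℝ)))
    (hg_pos : ∀ t ∈ Ici (0 : ℝ), 0 < g t)
    (h : ℝ → ℝ)
    (hFg : ∀ v : EuclideanSpace ℝ (Fin 3), F v = g (‖v‖ ^ 2))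
    (hFh : ∀ v : EuclideanSpace ℝ (Fin 3), F v = h (v 0) * h (v 1) * h (v 2)) :
    ∃ C₁ C₂ : ℝ, 0 < C₁ ∧
      ∀ v : EuclideanSpace ℝ (Fin 3), F v = C₁ * Real.exp (C₂ * ‖v‖ ^ 2) := by
  have hgh : ∀ x y z, g (x ^ 2 + y ^ 2 + z ^ 2) = h x * h y * h z := fun x y z => by
    simpa [EuclideanSpace.norm_sq_fin_three] using (hFg !₂[x, y, z]).symm.trans (hFh _)
  obtain ⟨c, hc⟩ := exists_eq_mul_exp_of_continuousOn_Ici_of_mul hg_cont hg_pos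
    fun s t hs ht => map_add_mul_map_zero_of_sum_sq hgh hs ht
  exact ⟨g 0, c, hg_pos 0 self_mem_Ici, fun v => by rw [hFg, hc _ (sq_nonneg _)]⟩

/-- Maxwell's postulates: if `F : ℝ³ → ℝ` depends only on the squared speed
(via a continuous strictly positive `g` on `[0, ∞)`) and factors as a product
of a continuous strictly positive function `h` of each velocity component,
then `F v = C₁ * exp (C₂ * ‖v‖²)` for some `C₁ > 0` and `C₂`. -/
theorem maxwell_distribution_form
    (F : EuclideanSpace ℝ (Fin 3) → ℝ)
    (g : ℝ → ℝ) (hg_cont : ContinuousOn g (Ici (0 : ℝ)))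
    (hg_pos : ∀ t ∈ Ici (0 : ℝ), 0 < g t)
    (h : ℝ → ℝ) (hh_cont : Continuous h) (hh_pos : ∀ x : ℝ, 0 < h x)
    (hFg : ∀ v : EuclideanSpace ℝ (Fin 3), F v = g (‖v‖ ^ 2))
    (hFh : ∀ v : EuclideanSpace ℝ (Fin 3), F v = h (v 0) * h (v 1) * h (v 2)) :
    ∃ C₁ C₂ : ℝ, 0 < C₁ ∧
      ∀ v : EuclideanSpace ℝ (Fin 3), F v = C₁ * Real.exp (C₂ * ‖v‖ ^ 2) :=
  maxwell_distribution_form_general F g hg_cont hg_pos h hFg hFh
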